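/- arXiv:1502.02739 — 2 statements merged into one kernel-verified Lean document; each statement's English description precedes it below -/
import Mathlib

section
/- Under the hypotheses τρ = ρτ on L and a·τ(a) = 1, the map α defined on D by α(l₀ + l₁z + l₂z²) = τ(l₀) + τ(a)τρ(l₂)·z + τ(a)τρ²(l₁)·z² is an involution of the second kind: α² = id, α(xy) = α(y)α(x) for all x,y ∈ D, and α restricted to the center E equals τ. -/
/-- The multiplication on triples `(l₀,l₁,l₂)` induced by the cyclic algebra
`D = L ⊕ Lz ⊕ Lz²`, `z³ = a`, `zl = ρ(l)z`. -/
noncomputable def cyclicMul {E L : Type*} [Field E] [Field L] [Algebra E L]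
    (a : E) (ρ : L ≃ₐ[E] L) (x y : L × L × L) : L × L × L :=
  (x.1 * y.1 + algebraMap E L a * x.2.1 * ρ y.2.2 + algebraMap E L a * x.2.2 * ρ (ρ y.2.1),
   x.1 * y.2.1 + x.2.1 * ρ y.1 + algebraMap E L a * x.2.2 * ρ (ρ y.2.2),
   x.1 * y.2.2 + x.2.1 * ρ y.2.1 + x.2.2 * ρ (ρ y.1))

/-- The map `α(l₀ + l₁z + l₂z²) = τ(l₀) + τ(a)τρ(l₂)·z + τ(a)τρ²(l₁)·z²`,
written on triples. -/
noncomputable def alphaTriple {E L : Type*} [Field E] [Field L] [Algebra E L]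
    (a : E) (ρ : L ≃ₐ[E] L) (τE : E ≃+* E) (τ : L ≃+* L) (x : L × L × L) : L × L × L :=
  (τ x.1, algebraMap E L (τE a) * τ (ρ x.2.2), algebraMap E L (τE a) * τ (ρ (ρ x.2.1)))

/-! Everything is a componentwise computation in `L`. The scalars `a` and `τ(a)` lie in `E`, so
`ρ` fixes them; `τ` commutes with `ρ`, so every composite of `τ` and `ρ` normalizes to `ρⁱτʲ` with
`i < 3` and `j < 2`; and the factors `τ(a)` that `α` introduces cancel against the factor `a` of
`z³ = a` because `a τ(a) = 1`. -/

section
variable {E L : Type*} [Field E] [Field L] [Algebra E L] {ρ : L ≃ₐ[E] L} {τE : E ≃+* E}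
  {τ : L ≃+* L} {a : E}

theorem alphaTriple_algebraMap (hcompat : ∀ e : E, τ (algebraMap E L e) = algebraMap E L (τE e))
    (e : E) : alphaTriple a ρ τE τ (algebraMap E L e, 0, 0) = (algebraMap E L (τE e), 0, 0) := by
  simp [alphaTriple, hcompat]

theorem alphaTriple_alphaTriple (hρ : ∀ l, ρ (ρ (ρ l)) = l)
    (hcompat : ∀ e : E, τ (algebraMap E L e) = algebraMap E L (τE e)) (hτ2 : τ * τ = 1)
    (hcomm : ∀ l : L, τ (ρ l) = ρ (τ l)) (ha : a * τE a = 1) (x : L × L × L) :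
    alphaTriple a ρ τE τ (alphaTriple a ρ τE τ x) = x := by
  have hττ : ∀ l : L, τ (τ l) = l := RingEquiv.congr_fun hτ2
  have hτc : τ (algebraMap E L (τE a)) = algebraMap E L a := by rw [← hcompat, hττ]
  have hnorm : algebraMap E L a * algebraMap E L (τE a) = 1 := by rw [← map_mul, ha, map_one]
  obtain ⟨x₀, x₁, x₂⟩ := x
  simp only [alphaTriple, map_mul, hcomm, hττ, hρ, AlgEquiv.commutes, hτc]
  refine Prod.ext rfl (Prod.ext ?_ ?_)
  · linear_combination x₁ * hnorm
  · linear_combination x₂ * hnorm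

theorem alphaTriple_cyclicMul (hρ : ∀ l, ρ (ρ (ρ l)) = l)
    (hcompat : ∀ e : E, τ (algebraMap E L e) = algebraMap E L (τE e))
    (hcomm : ∀ l : L, τ (ρ l) = ρ (τ l)) (ha : a * τE a = 1) (x y : L × L × L) :
    alphaTriple a ρ τE τ (cyclicMul a ρ x y) =
      cyclicMul a ρ (alphaTriple a ρ τE τ y) (alphaTriple a ρ τE τ x) := by
  have hnorm : algebraMap E L a * algebraMap E L (τE a) = 1 := by rw [← map_mul, ha, map_one]
  obtain ⟨x₀, x₁, x₂⟩ := x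
  obtain ⟨y₀, y₁, y₂⟩ := y
  simp only [alphaTriple, cyclicMul, map_add, map_mul, hcomm, hρ, AlgEquiv.commutes, hcompat]
  set c := algebraMap E L (τE a)
  refine Prod.ext ?_ (Prod.ext ?_ ?_)
  · linear_combination (-c) * (τ x₁ * ρ (τ y₂) + τ x₂ * ρ (ρ (τ y₁))) * hnorm
  · linear_combination (-c) * ρ (τ x₁) * ρ (ρ (τ y₁)) * hnorm
  · linear_combination
end

theorem alpha_involution_second_kind_general (E L : Type*) [Field E] [Field L] [Algebra E L]
    (ρ : L ≃ₐ[E] L) (hρ : ∀ l, ρ (ρ (ρ l)) = l)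
    (τE : E ≃+* E) (τ : L ≃+* L)
    (hcompat : ∀ e : E, τ (algebraMap E L e) = algebraMap E L (τE e))
    (hτ2 : τ * τ = 1)
    (hcomm : ∀ l : L, τ (ρ l) = ρ (τ l))
    (a : E) (ha : a * τE a = 1) :
    (∀ x : L × L × L, alphaTriple a ρ τE τ (alphaTriple a ρ τE τ x) = x) ∧
    (∀ x y : L × L × L,
      alphaTriple a ρ τE τ (cyclicMul a ρ x y) =
        cyclicMul a ρ (alphaTriple a ρ τE τ y) (alphaTriple a ρ τE τ x)) ∧
    (∀ e : E, alphaTriple a ρ τE τ (algebraMap E L e, 0, 0) =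
        (algebraMap E L (τE e), 0, 0)) :=
  ⟨alphaTriple_alphaTriple hρ hcompat hτ2 hcomm ha, alphaTriple_cyclicMul hρ hcompat hcomm ha,
    alphaTriple_algebraMap hcompat⟩

/-- Under `τρ = ρτ` and `a·τ(a) = 1`, the map `α` is an involution of the second
kind on `D`: `α² = id`, `α(xy) = α(y)α(x)`, and `α` restricts to `τ` on the
center `E`. -/
theorem alpha_involution_second_kind (E L : Type*) [Field E] [Field L] [Algebra E L]
    (ρ : L ≃ₐ[E] L) (hρ : ∀ l, ρ (ρ (ρ l)) = l)
    (τE : E ≃+* E) (hτE : τE * τE = 1) (τ : L ≃+* L)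
    (hcompat : ∀ e : E, τ (algebraMap E L e) = algebraMap E L (τE e))
    (hτ2 : τ * τ = 1)
    (hcomm : ∀ l : L, τ (ρ l) = ρ (τ l))
    (a : E) (ha : a * τE a = 1) :
    (∀ x : L × L × L, alphaTriple a ρ τE τ (alphaTriple a ρ τE τ x) = x) ∧
    (∀ x y : L × L × L,
      alphaTriple a ρ τE τ (cyclicMul a ρ x y) =
        cyclicMul a ρ (alphaTriple a ρ τE τ y) (alphaTriple a ρ τE τ x)) ∧
    (∀ e : E, alphaTriple a ρ τE τ (algebraMap E L e, 0, 0) =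
        (algebraMap E L (τE e), 0, 0)) :=
  alpha_involution_second_kind_general E L ρ hρ τE τ hcompat hτ2 hcomm a ha
end

section
/- Let a = (2+√-3)/(2-√-3) ∈ E = Q(√-3) and L = Q(ζ₉). Then a is not a norm from L to E, i.e., there is no x ∈ L with N_{L/E}(x) = a. -/
/-! Write `π = 1 - 2ζ³ = 2 - √-3` and `π' = 3 + 2ζ³ = 2 + √-3`, so that `ππ' = 7` and
`a = π' / π`. The prime `π` of `E` stays prime in `L`: reduction `ℤ[X] → 𝔽₇[t]/(t³ - 4) ≅ 𝔽₃₄₃`,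
`X ↦ t`, has kernel `π ℤ[ζ]` on `ℤ[ζ]`, and `ρ` acts on residues as `r ↦ r ^ 49`. Hence `π`
divides a norm `N(y)`, `y ∈ ℤ[ζ]`, only if it divides `y`, and then `π³ ∣ N(y)`: norms have
`π`-adic valuation divisible by `3`, while `a` has valuation `-1`. Concretely, after clearing
denominators, `N(g(ζ)) π = n³ π'ᵏ` forces `7 ∣ n` and then `π ∣ g(ζ)`, which yields a solution with
`n / 7` in place of `n`: infinite descent. -/

open Polynomial

theorem Polynomial.cyclotomic_nine (R : Type*) [CommRing R] :
    cyclotomic 9 R = X ^ 6 + X ^ 3 + 1 := by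
  rw [show 9 = 3 ^ (1 + 1) by rfl, cyclotomic_prime_pow_eq_geom_sum Nat.prime_three]
  simp only [Finset.sum_range_succ, Finset.range_one, Finset.sum_singleton, pow_zero, pow_one]
  ring

theorem IsPrimitiveRoot.cyclotomic_dvd_of_aeval_eq_zero {K : Type*} [Field K] [CharZero K]
    {μ : K} {n : ℕ} (h : IsPrimitiveRoot μ n) (hn : 0 < n) {p : ℤ[X]} (hp : aeval μ p = 0) :
    cyclotomic n ℤ ∣ p :=
  cyclotomic_eq_minpoly h hn ▸ minpoly.isIntegrallyClosed_dvd (h.isIntegral hn) hp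

theorem map_aeval_eq_aeval_comp {L F : Type*} [CommRing L] [FunLike F L L] [RingHomClass F L L]
    {ρ : F} {ζ : L} {k : ℕ} (hρ : ρ ζ = ζ ^ k) (g : ℤ[X]) :
    ρ (aeval ζ g) = aeval ζ (g.comp (X ^ k)) := by
  rw [aeval_comp, map_pow, aeval_X, ← hρ]
  exact (aeval_algHom_apply (RingHomClass.toRingHom ρ).toIntAlgHom ζ g).symm

theorem exists_intCast_mul_eq_aeval {L : Type*} [Field L] [Algebra ℚ L] {ζ : L}
    (hL : Algebra.adjoin ℚ {ζ} = ⊤) (x : L) :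
    ∃ n : ℤ, n ≠ 0 ∧ ∃ g : ℤ[X], n * x = aeval ζ g := by
  obtain ⟨q, rfl⟩ : x ∈ (aeval (R := ℚ) ζ).range := by
    rw [← Algebra.adjoin_singleton_eq_range_aeval, hL]
    trivial
  obtain ⟨b, hb, hbq⟩ := IsLocalization.integerNormalization_spec (nonZeroDivisors ℤ) q
  refine ⟨b, nonZeroDivisors.ne_zero hb,
    IsLocalization.integerNormalization (nonZeroDivisors ℤ) q, ?_⟩
  rw [← aeval_map_algebraMap ℚ, hbq]
  simp

section RelNorm

variable {L F : Type*} [CommMonoid L] [FunLike F L L] (ρ : F)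

def relNorm (x : L) : L := x * ρ x * ρ (ρ x)

theorem relNorm_of_map_eq {c : L} (hc : ρ c = c) : relNorm ρ c = c ^ 3 := by
  rw [relNorm, hc, hc, pow_three']

theorem relNorm_mul [MonoidHomClass F L L] (x y : L) :
    relNorm ρ (x * y) = relNorm ρ x * relNorm ρ y := by
  simp only [relNorm, map_mul]
  ac_rfl

end RelNorm

namespace QZetaNine

instance : Fact (Nat.Prime 7) := ⟨by norm_num⟩

theorem irreducible_X_pow_three_sub_four : Irreducible (X ^ 3 - C 4 : (ZMod 7)[X]) := by
  have hdeg : (X ^ 3 - C 4 : (ZMod 7)[X]).natDegree = 3 := natDegree_X_pow_sub_C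
  rw [irreducible_iff_roots_eq_zero_of_degree_le_three (by omega) (by omega),
    Multiset.eq_zero_iff_forall_notMem]
  intro a
  rw [mem_roots (X_pow_sub_C_ne_zero (by norm_num) _), IsRoot.def, eval_sub, eval_pow, eval_X,
    eval_C, sub_eq_zero]
  revert a
  decide

instance : Fact (Irreducible (X ^ 3 - C 4 : (ZMod 7)[X])) := ⟨irreducible_X_pow_three_sub_four⟩

abbrev 𝔽₃₄₃ := AdjoinRoot (X ^ 3 - C 4 : (ZMod 7)[X])

instance : CharP 𝔽₃₄₃ 7 := charP_of_injective_algebraMap (algebraMap (ZMod 7) 𝔽₃₄₃).injective 7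

noncomputable abbrev θ : 𝔽₃₄₃ := AdjoinRoot.root _

noncomputable def residue : ℤ[X] →+* 𝔽₃₄₃ := eval₂RingHom (Int.castRingHom 𝔽₃₄₃) θ

@[simp]
theorem residue_C (a : ℤ) : residue (C a) = a := eval₂_C _ _

@[simp]
theorem residue_X : residue X = θ := eval₂_X _ _

theorem θ_pow_three : θ ^ 3 = 4 := by
  have h := AdjoinRoot.aeval_eq (f := (X ^ 3 - C 4 : (ZMod 7)[X])) (X ^ 3 - C 4)
  rw [AdjoinRoot.mk_self, map_sub, map_pow, aeval_X, aeval_C, sub_eq_zero] at h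
  exact h.trans (map_ofNat _ 4)

theorem seven_eq_zero : (7 : 𝔽₃₄₃) = 0 := by exact_mod_cast CharP.cast_eq_zero 𝔽₃₄₃ 7

theorem residue_pi : residue (1 - 2 * X ^ 3) = 0 := by
  simp only [map_sub, map_one, map_mul, map_pow, map_ofNat, residue_X, θ_pow_three]
  linear_combination -seven_eq_zero

theorem residue_pi' : residue (3 + 2 * X ^ 3) = 4 := by
  simp only [map_add, map_mul, map_pow, map_ofNat, residue_X, θ_pow_three]
  linear_combination seven_eq_zero

theorem residue_cyclotomic_nine : residue (cyclotomic 9 ℤ) = 0 := by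
  simp only [cyclotomic_nine, map_add, map_one, map_pow, residue_X]
  linear_combination (θ ^ 3 + 5) * θ_pow_three + 3 * seven_eq_zero

theorem residue_comp_X_pow_four (p : ℤ[X]) : residue (p.comp (X ^ 4)) = residue p ^ 49 := by
  change (residue.comp (compRingHom (X ^ 4))) p = (iterateFrobenius 𝔽₃₄₃ 7 2).comp residue p
  congr 1
  ext
  · simp
  · have h43 : (4 : 𝔽₃₄₃) ^ 3 = 1 := by linear_combination 9 * seven_eq_zero
    simp only [RingHom.comp_apply, coe_compRingHom_apply, X_comp, map_pow, residue_X,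
      iterateFrobenius_def]
    calc θ ^ 4 = θ ^ 3 * θ := by ring
      _ = ((4 : 𝔽₃₄₃) ^ 3) ^ 5 * θ ^ 3 * θ := by rw [h43]; ring
      _ = (θ ^ 3) ^ 16 * θ := by rw [θ_pow_three]; ring
      _ = θ ^ (7 ^ 2) := by ring

theorem exists_eq_of_residue_eq_zero {p : ℤ[X]} (hp : residue p = 0) :
    ∃ a b : ℤ[X], p = (X ^ 3 - C 4) * a + C 7 * b := by
  have hdvd : (X ^ 3 - C 4 : (ZMod 7)[X]) ∣ p.map (Int.castRingHom (ZMod 7)) := by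
    rw [← AdjoinRoot.mk_eq_zero, ← AdjoinRoot.aeval_eq, aeval_def, eval₂_map,
      RingHom.ext_int ((algebraMap _ _).comp _) (Int.castRingHom 𝔽₃₄₃)]
    exact hp
  obtain ⟨Q, hQ⟩ := hdvd
  obtain ⟨a, rfl⟩ := map_surjective _ (ZMod.ringHom_surjective (Int.castRingHom _)) Q
  have hker : p - (X ^ 3 - C 4) * a ∈ RingHom.ker (mapRingHom (Int.castRingHom (ZMod 7))) := by
    rw [RingHom.mem_ker, map_sub, map_mul, coe_mapRingHom, hQ]
    simp [map_ofNat C 4]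
  rw [ker_mapRingHom, ZMod.ker_intCastRingHom, Ideal.map_span, Set.image_singleton,
    Ideal.mem_span_singleton] at hker
  obtain ⟨b, hb⟩ := hker
  exact ⟨a, b, by simpa [sub_eq_iff_eq_add'] using hb⟩

noncomputable def normPoly (g : ℤ[X]) : ℤ[X] :=
  g * g.comp (X ^ 4) * (g.comp (X ^ 4)).comp (X ^ 4)

theorem residue_normPoly (g : ℤ[X]) :
    residue (normPoly g) = residue g ^ (1 + 49 + 49 ^ 2) := by
  simp only [normPoly, map_mul, residue_comp_X_pow_four]
  ring

theorem relNorm_aeval {L F : Type*} [CommRing L] [FunLike F L L] [RingHomClass F L L]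
    {ρ : F} {ζ : L} (hρ : ρ ζ = ζ ^ 4) (g : ℤ[X]) :
    relNorm ρ (aeval ζ g) = aeval ζ (normPoly g) := by
  rw [relNorm, normPoly, map_aeval_eq_aeval_comp hρ, map_aeval_eq_aeval_comp hρ, map_mul,
    map_mul]

section Domain

variable {R : Type*} [CommRing R] [IsDomain R] {ζ : R}

theorem pow_six_add_pow_three_add_one (hζ : IsPrimitiveRoot ζ 9) : ζ ^ 6 + ζ ^ 3 + 1 = 0 := by
  simpa [cyclotomic_nine] using (hζ.isRoot_cyclotomic (by norm_num)).eq_zero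

theorem pi_mul_pi' (hζ : IsPrimitiveRoot ζ 9) : (1 - 2 * ζ ^ 3) * (3 + 2 * ζ ^ 3) = 7 := by
  linear_combination -4 * pow_six_add_pow_three_add_one hζ

theorem pi_ne_zero [CharZero R] (hζ : IsPrimitiveRoot ζ 9) : 1 - 2 * ζ ^ 3 ≠ 0 :=
  left_ne_zero_of_mul (by rw [pi_mul_pi' hζ]; norm_num)

theorem map_pi {F : Type*} [FunLike F R R] [RingHomClass F R R] {ρ : F}
    (hζ : IsPrimitiveRoot ζ 9) (hρ : ρ ζ = ζ ^ 4) : ρ (1 - 2 * ζ ^ 3) = 1 - 2 * ζ ^ 3 := by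
  simp only [map_sub, map_one, map_mul, map_ofNat, map_pow, hρ]
  linear_combination (-2 * ζ ^ 3 * (ζ ^ 3 - 1)) * pow_six_add_pow_three_add_one hζ

end Domain

variable {L : Type*} [Field L] [CharZero L] {ζ : L}

theorem residue_eq_zero_iff (hζ : IsPrimitiveRoot ζ 9) {p : ℤ[X]} :
    residue p = 0 ↔ ∃ q : ℤ[X], aeval ζ p = (1 - 2 * ζ ^ 3) * aeval ζ q := by
  constructor
  · intro hp
    obtain ⟨a, b, rfl⟩ := exists_eq_of_residue_eq_zero hp
    -- `ζ³ - 4 = π (-2 - ζ³)` and `7 = π π'`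
    refine ⟨(-2 - X ^ 3) * a + (3 + 2 * X ^ 3) * b, ?_⟩
    simp only [map_add, map_mul, map_sub, map_neg, map_pow, aeval_X, map_ofNat]
    linear_combination (4 * aeval ζ b - 2 * aeval ζ a) * pow_six_add_pow_three_add_one hζ
  · rintro ⟨q, hq⟩
    obtain ⟨r, hr⟩ : cyclotomic 9 ℤ ∣ p - (1 - 2 * X ^ 3) * q :=
      hζ.cyclotomic_dvd_of_aeval_eq_zero (by norm_num) (by simp [hq, map_ofNat])
    rw [sub_eq_iff_eq_add] at hr
    rw [hr, map_add, map_mul, map_mul, residue_cyclotomic_nine, residue_pi]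
    ring

theorem seven_dvd_of_aeval_mul_pi_eq (hζ : IsPrimitiveRoot ζ 9) {p : ℤ[X]} {n : ℤ} {k : ℕ}
    (h : aeval ζ p * (1 - 2 * ζ ^ 3) = n ^ 3 * (3 + 2 * ζ ^ 3) ^ k) : 7 ∣ n := by
  have hres := (residue_eq_zero_iff hζ (p := C (n ^ 3) * (3 + 2 * X ^ 3) ^ k)).mpr
    ⟨p, by
      simp only [map_mul, map_pow, map_add, map_ofNat, aeval_X, eq_intCast, map_intCast]
      linear_combination -h⟩
  rw [map_mul, map_pow _ (3 + 2 * X ^ 3), residue_pi', residue_C, Int.cast_pow] at hres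
  have h4 : (4 : 𝔽₃₄₃) ≠ 0 := by
    exact_mod_cast (CharP.cast_eq_zero_iff 𝔽₃₄₃ 7 4).not.mpr (by norm_num)
  exact (CharP.intCast_eq_zero_iff 𝔽₃₄₃ 7 n).mp
    (pow_eq_zero_iff three_ne_zero |>.mp
      ((mul_eq_zero.mp hres).resolve_right (pow_ne_zero k h4)))

theorem exists_pi_mul_of_relNorm_eq_pi_mul {F : Type*} [FunLike F L L] [RingHomClass F L L]
    {ρ : F} (hζ : IsPrimitiveRoot ζ 9) (hρ : ρ ζ = ζ ^ 4) {g q : ℤ[X]}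
    (h : relNorm ρ (aeval ζ g) = (1 - 2 * ζ ^ 3) * aeval ζ q) :
    ∃ v : ℤ[X], aeval ζ g = (1 - 2 * ζ ^ 3) * aeval ζ v := by
  have hnorm : residue (normPoly g) = 0 := (residue_eq_zero_iff hζ).mpr ⟨q, relNorm_aeval hρ g ▸ h⟩
  rw [residue_normPoly, pow_eq_zero_iff (by norm_num)] at hnorm
  exact (residue_eq_zero_iff hζ).mp hnorm

theorem eq_zero_of_relNorm_mul_pi_eq {F : Type*} [FunLike F L L] [RingHomClass F L L] {ρ : F}
    (hζ : IsPrimitiveRoot ζ 9) (hρ : ρ ζ = ζ ^ 4) (n : ℤ) (k : ℕ) (g : ℤ[X])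
    (h : relNorm ρ (aeval ζ g) * (1 - 2 * ζ ^ 3) = n ^ 3 * (3 + 2 * ζ ^ 3) ^ k) : n = 0 := by
  have hπ := pi_ne_zero hζ
  obtain ⟨m, rfl⟩ := seven_dvd_of_aeval_mul_pi_eq hζ (relNorm_aeval hρ g ▸ h)
  have hg : relNorm ρ (aeval ζ g) =
      (1 - 2 * ζ ^ 3) * ((1 - 2 * ζ ^ 3) * m ^ 3 * (3 + 2 * ζ ^ 3) ^ (k + 3)) := by
    refine mul_right_cancel₀ hπ ?_
    rw [h]
    push_cast
    rw [← pi_mul_pi' hζ]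
    ring
  obtain ⟨v, hv⟩ := exists_pi_mul_of_relNorm_eq_pi_mul hζ hρ (g := g)
    (q := (1 - 2 * X ^ 3) * C (m ^ 3) * (3 + 2 * X ^ 3) ^ (k + 3)) (by simp [hg, map_ofNat])
  rw [hv, relNorm_mul, relNorm_of_map_eq ρ (map_pi hζ hρ)] at hg
  rcases eq_or_ne m 0 with rfl | hm
  · simp
  refine absurd (eq_zero_of_relNorm_mul_pi_eq hζ hρ m (k + 3) v ?_) hm
  exact mul_left_cancel₀ (pow_ne_zero 2 hπ) (by linear_combination hg)
termination_by n.natAbs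

end QZetaNine

/-- In `L = ℚ(ζ₉)` with `E = ℚ(√-3) = ℚ(ζ₃)` the fixed field of
`ρ : ζ₉ ↦ ζ₉⁴` (a generator of `Gal(L/E)`), the element
`a = (2+√-3)/(2-√-3)`, with `√-3 = 1 + 2ζ₃ = 1 + 2ζ₉³`, is not a relative norm
`N_{L/E}(x) = x·ρ(x)·ρ²(x)` from `L`. -/
theorem a_not_a_norm (L : Type*) [Field L] [Algebra ℚ L]
    (ζ : L) (hζ : IsPrimitiveRoot ζ 9)
    (hL : Algebra.adjoin ℚ {ζ} = ⊤)
    (ρ : L ≃ₐ[ℚ] L) (hρ : ρ ζ = ζ ^ 4) :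
    ¬ ∃ x : L, x * ρ x * ρ (ρ x) =
        (2 + (1 + 2 * ζ ^ 3)) / (2 - (1 + 2 * ζ ^ 3)) := by
  have := charZero_of_injective_algebraMap (algebraMap ℚ L).injective
  rintro ⟨x, hx⟩
  obtain ⟨n, hn, g, hg⟩ := exists_intCast_mul_eq_aeval hL x
  refine hn (QZetaNine.eq_zero_of_relNorm_mul_pi_eq hζ hρ n 1 g ?_)
  rw [← hg, relNorm_mul, relNorm_of_map_eq ρ (map_intCast ρ n), relNorm, hx,
    show (2 : L) - (1 + 2 * ζ ^ 3) = 1 - 2 * ζ ^ 3 by ring, mul_assoc,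
    div_mul_cancel₀ _ (QZetaNine.pi_ne_zero hζ)]
  ring
end
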